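/- arXiv:math-ph/0411022 — 3 statements merged into one kernel-verified Lean document; each statement's English description precedes it below -/
import Mathlib

section
/- Let a,b,c,d ∈ ℝ with ad − bc = 1 and α ∈ ℂ with |α| = 1. Define scalar functions R₊(k) = (bk² + i(a−d)k + c)/(bk² + i(a+d)k − c), T₊(k) = 2iαk/(bk² + i(a+d)k − c), R₋(k) = (bk² + i(a−d)k + c)/(bk² − i(a+d)k − c), T₋(k) = −2i ᾱ k/(bk² − i(a+d)k − c). Then for all real k where the denominators are nonzero: T₊(k)T₋(k) + R₊(k)R₊(−k) = 1, T₋(k)T₊(k) + R₋(k)R₋(−k) = 1, T₊(k)R₋(k) + R₊(k)T₊(−k) = 0, and T₋(k)R₊(k) + R₋(k)T₋(−k) = 0. -/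
/-!
Write `D(k) = bk² + i(a+d)k − c` and `N(k) = bk² + i(a−d)k + c`, so that `R₊ = N/D`,
`T₊ = 2iαk/D`, and the `−` coefficients have denominator `D(−k)`. The two relations with
value `1` reduce, via `αᾱ = 1`, to `D(k)D(−k) − N(k)N(−k) = 4(ad − bc)k² = 4k²`; the two
with value `0` are identities of rational functions, because `k ↦ T₊(k)·D(k)` is odd.
-/

open Complex

namespace NLSDefect

variable (a b c d : ℂ)

def den (k : ℂ) : ℂ := b * k ^ 2 + I * (a + d) * k - c

def num (k : ℂ) : ℂ := b * k ^ 2 + I * (a - d) * k + c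

theorem den_neg (k : ℂ) : den a b c d (-k) = b * k ^ 2 - I * (a + d) * k - c := by
  unfold den
  ring

theorem den_mul_den_neg (k : ℂ) :
    den a b c d k * den a b c d (-k) =
      num a b c d k * num a b c d (-k) + 4 * (a * d - b * c) * k ^ 2 := by
  unfold den num
  linear_combination (-4 * a * d * k ^ 2) * I_sq

variable {a b c d}

theorem transmission_mul_add_reflection_mul_eq_one (hdet : a * d - b * c = 1) {α : ℂ}
    (hα : α * starRingEnd ℂ α = 1) {k : ℂ} (hk : den a b c d k ≠ 0)
    (hk' : den a b c d (-k) ≠ 0) :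
    2 * I * α * k / den a b c d k * (-2 * I * starRingEnd ℂ α * k / den a b c d (-k)) +
      num a b c d k / den a b c d k * (num a b c d (-k) / den a b c d (-k)) = 1 := by
  rw [div_mul_div_comm, div_mul_div_comm, ← add_div,
    div_eq_one_iff_eq (mul_ne_zero hk hk'), den_mul_den_neg, hdet]
  linear_combination (-4 * k ^ 2 * I ^ 2) * hα - 4 * k ^ 2 * I_sq

end NLSDefect

open NLSDefect

/-- The scalar reflection/transmission coefficients of the NLS defect model satisfy the
unitarity relations. -/
theorem nls_coeffs_unitarity (a b c d : ℝ) (habcd : a * d - b * c = 1)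
    (α : ℂ) (hα : α * (starRingEnd ℂ) α = 1)
    (Rp Rm Tp Tm : ℝ → ℂ)
    (hRp : ∀ k : ℝ, Rp k = ((b : ℂ) * k ^ 2 + I * ((a : ℂ) - d) * k + c) /
        ((b : ℂ) * k ^ 2 + I * ((a : ℂ) + d) * k - c))
    (hTp : ∀ k : ℝ, Tp k = 2 * I * α * k /
        ((b : ℂ) * k ^ 2 + I * ((a : ℂ) + d) * k - c))
    (hRm : ∀ k : ℝ, Rm k = ((b : ℂ) * k ^ 2 + I * ((a : ℂ) - d) * k + c) /
        ((b : ℂ) * k ^ 2 - I * ((a : ℂ) + d) * k - c))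
    (hTm : ∀ k : ℝ, Tm k = -2 * I * (starRingEnd ℂ) α * k /
        ((b : ℂ) * k ^ 2 - I * ((a : ℂ) + d) * k - c))
    (k : ℝ)
    (hden1 : (b : ℂ) * k ^ 2 + I * ((a : ℂ) + d) * k - c ≠ 0)
    (hden2 : (b : ℂ) * k ^ 2 - I * ((a : ℂ) + d) * k - c ≠ 0) :
    Tp k * Tm k + Rp k * Rp (-k) = 1 ∧
    Tm k * Tp k + Rm k * Rm (-k) = 1 ∧
    Tp k * Rm k + Rp k * Tp (-k) = 0 ∧
    Tm k * Rp k + Rm k * Tm (-k) = 0 := by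
  have hdet : (a : ℂ) * d - b * c = 1 := by exact_mod_cast habcd
  have hRp' : ∀ k : ℝ, Rp k = num a b c d k / den a b c d k := hRp
  have hTp' : ∀ k : ℝ, Tp k = 2 * I * α * k / den a b c d k := hTp
  have hRm' : ∀ k : ℝ, Rm k = num a b c d k / den a b c d (-k) :=
    fun k => by rw [den_neg]; exact hRm k
  have hTm' : ∀ k : ℝ, Tm k = -2 * I * starRingEnd ℂ α * k / den a b c d (-k) :=
    fun k => by rw [den_neg]; exact hTm k
  rw [← den_neg] at hden2
  simp only [hRp', hTp', hRm', hTm', ofReal_neg, neg_neg]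
  have hunit := transmission_mul_add_reflection_mul_eq_one hdet hα hden1 hden2
  refine ⟨hunit, ?_, by ring, by ring⟩
  rw [← hunit]
  ring
end

section
/- Let A, B, C, θ : ℝ → ℝ satisfy A(−k) = −A(k), B(−k) = B(k), C(−k) = −C(k), and θ(−k) = −ε₊ε₋ θ(k) with ε₊, ε₋ ∈ {1, −1}. Define ρ_±(k) = ε_± · ((A(k)−i)/(A(k)+i)) · ((C(k)∓i)/(C(k)±i)) · cos θ(k) and τ_±(k) = ((B(k)∓i)/(B(k)±i)) · ((C(k)∓i)/(C(k)±i)) · sin θ(k). Then for all k ∈ ℝ: (i) conj(ρ_±(k)) = ρ_±(−k); (ii) conj(τ₋(k)) = τ₊(k); (iii) |ρ_±(k)|² + |τ₊(k)|² = 1; (iv) ρ_∓(k)τ_±(k) + ρ_±(k)τ_±(−k) = 0. -/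
open Complex

lemma aux_add_ne (x : ℝ) : (x:ℂ) + I ≠ 0 := by
  intro h; have := congrArg Complex.im h; simp at this

lemma aux_sub_ne (x : ℝ) : (x:ℂ) - I ≠ 0 := by
  intro h; have := congrArg Complex.im h; simp at this

lemma aux_conj (x : ℝ) :
    (starRingEnd ℂ) (((x:ℂ) - I) / ((x:ℂ) + I)) = ((x:ℂ) + I) / ((x:ℂ) - I) := by
  simp [map_div₀, sub_eq_add_neg]

lemma aux_conj' (x : ℝ) :
    (starRingEnd ℂ) (((x:ℂ) + I) / ((x:ℂ) - I)) = ((x:ℂ) - I) / ((x:ℂ) + I) := by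
  simp [map_div₀, sub_eq_add_neg]

lemma aux_neg (x : ℝ) : (-(x:ℂ) - I) / (-(x:ℂ) + I) = ((x:ℂ) + I) / ((x:ℂ) - I) := by
  rw [show -(x:ℂ) - I = -((x:ℂ) + I) by ring, show -(x:ℂ) + I = -((x:ℂ) - I) by ring,
    neg_div_neg_eq]

lemma aux_neg' (x : ℝ) : (-(x:ℂ) + I) / (-(x:ℂ) - I) = ((x:ℂ) - I) / ((x:ℂ) + I) := by
  rw [show -(x:ℂ) - I = -((x:ℂ) + I) by ring, show -(x:ℂ) + I = -((x:ℂ) - I) by ring,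
    neg_div_neg_eq]

lemma aux_normSq (x : ℝ) :
    Complex.normSq (((x:ℂ) - I) / ((x:ℂ) + I)) = 1 := by
  rw [map_div₀]
  have h : Complex.normSq ((x:ℂ) - I) = Complex.normSq ((x:ℂ) + I) := by
    simp [Complex.normSq_apply]
  rw [h, div_self]
  simp [Complex.normSq_apply]
  nlinarith [sq_nonneg x]

lemma aux_normSq' (x : ℝ) :
    Complex.normSq (((x:ℂ) + I) / ((x:ℂ) - I)) = 1 := by
  rw [map_div₀]
  have h : Complex.normSq ((x:ℂ) - I) = Complex.normSq ((x:ℂ) + I) := by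
    simp [Complex.normSq_apply]
  rw [h, div_self]
  simp [Complex.normSq_apply]
  nlinarith [sq_nonneg x]

/-- General parametrization of the scalar reflection/transmission data: the functions
`ρ_±, τ_±` built from odd/even real functions `A, B, C, θ` satisfy the hermiticity and
unitarity constraints. -/
theorem general_parametrization (εp εm : ℝ)
    (hεp : εp = 1 ∨ εp = -1) (hεm : εm = 1 ∨ εm = -1)
    (A B C θ : ℝ → ℝ)
    (hA : ∀ k, A (-k) = -A k) (hB : ∀ k, B (-k) = B k)
    (hC : ∀ k, C (-k) = -C k) (hθ : ∀ k, θ (-k) = -εp * εm * θ k)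
    (ρp ρm τp τm : ℝ → ℂ)
    (hρp : ∀ k, ρp k = (εp : ℂ) * (((A k : ℂ) - I) / ((A k : ℂ) + I)) *
        (((C k : ℂ) - I) / ((C k : ℂ) + I)) * Real.cos (θ k))
    (hρm : ∀ k, ρm k = (εm : ℂ) * (((A k : ℂ) - I) / ((A k : ℂ) + I)) *
        (((C k : ℂ) + I) / ((C k : ℂ) - I)) * Real.cos (θ k))
    (hτp : ∀ k, τp k = (((B k : ℂ) - I) / ((B k : ℂ) + I)) *
        (((C k : ℂ) - I) / ((C k : ℂ) + I)) * Real.sin (θ k))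
    (hτm : ∀ k, τm k = (((B k : ℂ) + I) / ((B k : ℂ) - I)) *
        (((C k : ℂ) + I) / ((C k : ℂ) - I)) * Real.sin (θ k)) :
    ∀ k : ℝ,
      (starRingEnd ℂ) (ρp k) = ρp (-k) ∧
      (starRingEnd ℂ) (ρm k) = ρm (-k) ∧
      (starRingEnd ℂ) (τm k) = τp k ∧
      Complex.normSq (ρp k) + Complex.normSq (τp k) = 1 ∧
      Complex.normSq (ρm k) + Complex.normSq (τp k) = 1 ∧
      ρm k * τp k + ρp k * τp (-k) = 0 ∧
      ρp k * τm k + ρm k * τm (-k) = 0 := by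
  intro k
  have htrig := Real.sin_sq_add_cos_sq (θ k)
  have hεpm : εp * εm = 1 ∨ εp * εm = -1 := by
    rcases hεp with h | h <;> rcases hεm with h' | h' <;> simp [h, h']
  have hcos : ∀ j, Real.cos (θ (-j)) = Real.cos (θ j) := by
    intro j
    rw [hθ, show -εp * εm * θ j = -(εp * εm * θ j) by ring, Real.cos_neg]
    rcases hεpm with h | h <;> rw [h] <;> simp
  have hsin : ∀ j, Real.sin (θ (-j)) = -(εp * εm) * Real.sin (θ j) := by
    intro j
    rw [hθ, show -εp * εm * θ j = -(εp * εm * θ j) by ring, Real.sin_neg]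
    rcases hεpm with h | h <;> rw [h] <;> simp
  rcases hεp with h | h <;> rcases hεm with h' | h' <;> subst h <;> subst h' <;>
    refine ⟨?_, ?_, ?_, ?_, ?_, ?_, ?_⟩ <;>
    simp only [hρp, hρm, hτp, hτm, hA, hB, hC, hcos, hsin,
      Complex.ofReal_neg, Complex.ofReal_mul, Complex.ofReal_one, mul_one, one_mul,
      neg_neg, neg_mul, mul_neg, neg_one_mul,
      map_mul, map_one, map_neg, conj_ofReal, aux_conj, aux_conj', aux_neg, aux_neg',
      aux_normSq, aux_normSq', Complex.normSq_ofReal, normSq_neg] <;>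
    try ring1
  all_goals linarith [Real.sin_sq_add_cos_sq (θ k)]
end

section
/- Let ρ_±, τ_± : ℝ → ℂ satisfy conj(ρ_±(k)) = ρ_±(−k), conj(τ₋(k)) = τ₊(k), |ρ_±(k)|² + |τ₊(k)|² = 1, ρ_∓(k)τ_±(k) + ρ_±(k)τ_±(−k) = 0. Let M be a unitary N×N matrix, 𝔼 diagonal with 𝔼² = I, a ∈ ℝ, and set Λ(k) = (I+iak𝔼)/(1+iak), R_±(k) = ρ_±(k) M Λ(±k) M⁻¹, T_±(k) = τ_±(k) M Λ(±k) M⁻¹. Then the 2N×2N matrices ℛ(k) = diag(R₊(k), R₋(k)) and 𝒯(k) = offdiag(T₊(k); T₋(k)) satisfy ℛ(k)† = ℛ(−k), 𝒯(k)† = 𝒯(k), 𝒯(k)𝒯(k) + ℛ(k)ℛ(−k) = I_{2N}, and 𝒯(k)ℛ(k) + ℛ(k)𝒯(−k) = 0. -/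
open Matrix Complex

/-- The classified reflection/transmission matrices
`R_±(k) = ρ_±(k) M Λ(±k) M⁻¹`, `T_±(k) = τ_±(k) M Λ(±k) M⁻¹` assembled into the
`2N×2N` matrices `ℛ(k) = diag(R₊,R₋)` and `𝒯(k) = offdiag(T₊;T₋)` satisfy the
hermiticity and unitarity constraints of the RT algebra representation. -/
theorem classified_RT_matrices (N : ℕ) (hN : 1 ≤ N)
    (ρp ρm τp τm : ℝ → ℂ)
    (hherm1 : ∀ k, (starRingEnd ℂ) (ρp k) = ρp (-k))
    (hherm2 : ∀ k, (starRingEnd ℂ) (ρm k) = ρm (-k))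
    (hherm3 : ∀ k, (starRingEnd ℂ) (τm k) = τp k)
    (hnorm1 : ∀ k, Complex.normSq (ρp k) + Complex.normSq (τp k) = 1)
    (hnorm2 : ∀ k, Complex.normSq (ρm k) + Complex.normSq (τp k) = 1)
    (hmix1 : ∀ k, ρm k * τp k + ρp k * τp (-k) = 0)
    (hmix2 : ∀ k, ρp k * τm k + ρm k * τm (-k) = 0)
    (M : Matrix (Fin N) (Fin N) ℂ) (hM : M ∈ Matrix.unitaryGroup (Fin N) ℂ)
    (E : Matrix (Fin N) (Fin N) ℂ)
    (hdiag : ∃ d : Fin N → ℝ, E = Matrix.diagonal fun i => (d i : ℂ))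
    (hE : E * E = 1)
    (a : ℝ)
    (Λ : ℝ → Matrix (Fin N) (Fin N) ℂ)
    (hΛ : ∀ k : ℝ, Λ k =
      ((1 + I * a * k)⁻¹) • ((1 : Matrix (Fin N) (Fin N) ℂ) + (I * a * k) • E))
    (Rp Rm Tp Tm : ℝ → Matrix (Fin N) (Fin N) ℂ)
    (hRp : ∀ k, Rp k = ρp k • (M * Λ k * M⁻¹))
    (hRm : ∀ k, Rm k = ρm k • (M * Λ (-k) * M⁻¹))
    (hTp : ∀ k, Tp k = τp k • (M * Λ k * M⁻¹))
    (hTm : ∀ k, Tm k = τm k • (M * Λ (-k) * M⁻¹))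
    (calR calT : ℝ → Matrix (Fin N ⊕ Fin N) (Fin N ⊕ Fin N) ℂ)
    (hcalR : ∀ k, calR k = Matrix.fromBlocks (Rp k) 0 0 (Rm k))
    (hcalT : ∀ k, calT k = Matrix.fromBlocks 0 (Tp k) (Tm k) 0) :
    ∀ k : ℝ,
      (calR k)ᴴ = calR (-k) ∧
      (calT k)ᴴ = calT k ∧
      calT k * calT k + calR k * calR (-k) = 1 ∧
      calT k * calR k + calR k * calT (-k) = 0 := by

  obtain ⟨d, hd⟩ := hdiag
  have hEH : Eᴴ = E := by
    rw [hd]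
    ext i j
    rcases eq_or_ne i j with h | h
    · subst h; simp [Matrix.conjTranspose_apply, Matrix.diagonal_apply_eq]
    · simp [Matrix.conjTranspose_apply, Matrix.diagonal_apply_ne _ h,
        Matrix.diagonal_apply_ne _ (Ne.symm h)]
  have hMH : Mᴴ * M = 1 := hM.1
  have hMH2 : M * Mᴴ = 1 := hM.2
  have hMi : M⁻¹ = Mᴴ := Matrix.inv_eq_left_inv hMH
  have hx : ∀ k : ℝ, (starRingEnd ℂ) (I * (a : ℂ) * (k : ℂ)) = I * (a : ℂ) * ((-k : ℝ) : ℂ) := by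
    intro k
    push_cast
    simp [_root_.map_mul, Complex.conj_I, Complex.conj_ofReal]
  have hΛH : ∀ k : ℝ, (Λ k)ᴴ = Λ (-k) := by
    intro k
    rw [hΛ k, hΛ (-k)]
    rw [Matrix.conjTranspose_smul, Matrix.conjTranspose_add, Matrix.conjTranspose_one,
      Matrix.conjTranspose_smul, hEH, ← starRingEnd_apply, ← starRingEnd_apply,
      map_inv₀, _root_.map_add, _root_.map_one, hx]
  have hne : ∀ k : ℝ, (1 + I * (a : ℂ) * (k : ℂ)) ≠ 0 := by
    intro k h
    have h2 := congrArg Complex.re h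
    simp [Complex.add_re, Complex.mul_re] at h2
  have hmulsmul : ∀ (c e : ℂ) (A B : Matrix (Fin N) (Fin N) ℂ),
      (c • A) * (e • B) = (c * e) • (A * B) := by
    intro c e A B
    rw [Matrix.smul_mul, Matrix.mul_smul, smul_smul]
  have hΛΛ : ∀ k : ℝ, Λ k * Λ (-k) = 1 := by
    intro k
    rw [hΛ k, hΛ (-k), hmulsmul]
    have hexp : ((1 : Matrix (Fin N) (Fin N) ℂ) + (I * a * k) • E) *
        ((1 : Matrix (Fin N) (Fin N) ℂ) + (I * (a : ℂ) * ((-k : ℝ) : ℂ)) • E)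
        = ((1 + I * a * k) * (1 + I * (a : ℂ) * ((-k : ℝ) : ℂ)))
          • (1 : Matrix (Fin N) (Fin N) ℂ) := by
      rw [add_mul, one_mul, mul_add, mul_one, hmulsmul, hE]
      push_cast
      module
    rw [hexp, smul_smul]
    have hsc : ((1 + I * a * k)⁻¹ * (1 + I * (a : ℂ) * ((-k : ℝ) : ℂ))⁻¹) *
        ((1 + I * a * k) * (1 + I * (a : ℂ) * ((-k : ℝ) : ℂ))) = 1 := by
      rw [mul_mul_mul_comm, inv_mul_cancel₀ (hne k), inv_mul_cancel₀ (hne (-k)), mul_one]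
    rw [hsc, one_smul]
  have hPH : ∀ k : ℝ, (M * Λ k * M⁻¹)ᴴ = M * Λ (-k) * M⁻¹ := by
    intro k
    rw [Matrix.conjTranspose_mul, Matrix.conjTranspose_mul, hΛH, hMi,
      Matrix.conjTranspose_conjTranspose, mul_assoc]
  have hPP : ∀ k : ℝ, (M * Λ k * M⁻¹) * (M * Λ (-k) * M⁻¹) = 1 := by
    intro k
    simp only [hMi, mul_assoc]
    rw [← mul_assoc Mᴴ M, hMH, one_mul, ← mul_assoc (Λ k), hΛΛ k, one_mul, hMH2]
  have hPP' : ∀ k : ℝ, (M * Λ (-k) * M⁻¹) * (M * Λ k * M⁻¹) = 1 := by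
    intro k
    have h := hPP (-k)
    rwa [neg_neg] at h
  have hτ : ∀ k : ℝ, (starRingEnd ℂ) (τp k) = τm k := by
    intro k
    rw [← hherm3 k, Complex.conj_conj]
  intro k
  refine ⟨?_, ?_, ?_, ?_⟩
  · rw [hcalR k, hcalR (-k), Matrix.fromBlocks_conjTranspose]
    have h1 : (Rp k)ᴴ = Rp (-k) := by
      rw [hRp k, hRp (-k), Matrix.conjTranspose_smul, ← starRingEnd_apply, hherm1, hPH]
    have h2 : (Rm k)ᴴ = Rm (-k) := by
      rw [hRm k, hRm (-k), Matrix.conjTranspose_smul, ← starRingEnd_apply, hherm2, hPH, neg_neg]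
    rw [h1, h2, Matrix.conjTranspose_zero]
  · rw [hcalT k, Matrix.fromBlocks_conjTranspose]
    have h1 : (Tp k)ᴴ = Tm k := by
      rw [hTp k, hTm k, Matrix.conjTranspose_smul, ← starRingEnd_apply, hτ k, hPH]
    have h2 : (Tm k)ᴴ = Tp k := by
      rw [hTm k, hTp k, Matrix.conjTranspose_smul, ← starRingEnd_apply, hherm3, hPH, neg_neg]
    rw [h1, h2, Matrix.conjTranspose_zero]
  · rw [hcalT k, hcalR k, hcalR (-k), Matrix.fromBlocks_multiply, Matrix.fromBlocks_multiply,
      Matrix.fromBlocks_add, ← Matrix.fromBlocks_one]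
    have h1 : Tp k * Tm k + Rp k * Rp (-k) = 1 := by
      rw [hTp k, hTm k, hRp k, hRp (-k), hmulsmul, hmulsmul, hPP k, ← hherm1, ← hτ k,
        Complex.mul_conj, Complex.mul_conj, ← add_smul]
      norm_cast
      rw [add_comm, hnorm1 k, one_smul]
    have h2 : Tm k * Tp k + Rm k * Rm (-k) = 1 := by
      rw [hTm k, hTp k, hRm k, hRm (-k), neg_neg, hmulsmul, hmulsmul, hPP' k, ← hherm2, ← hτ k,
        mul_comm ((starRingEnd ℂ) (τp k)) (τp k), Complex.mul_conj, Complex.mul_conj, ← add_smul]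
      norm_cast
      rw [add_comm, hnorm2 k, one_smul]
    simp [h1, h2]
  · rw [hcalT k, hcalR k, hcalT (-k), Matrix.fromBlocks_multiply,
      Matrix.fromBlocks_multiply, Matrix.fromBlocks_add]
    have h1 : Tp k * Rm k + Rp k * Tp (-k) = 0 := by
      rw [hTp k, hRm k, hRp k, hTp (-k), hmulsmul, hmulsmul, hPP k, ← add_smul,
        mul_comm (τp k) (ρm k), hmix1 k, zero_smul]
    have h2 : Tm k * Rp k + Rm k * Tm (-k) = 0 := by
      rw [hTm k, hRp k, hRm k, hTm (-k), neg_neg, hmulsmul, hmulsmul, hPP' k, ← add_smul,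
        mul_comm (τm k) (ρp k), hmix2 k, zero_smul]
    simp [h1, h2, Matrix.fromBlocks_zero]
end
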